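/- Every lexicographic choice rule satisfies gross substitutes: if a ∈ C(S,q) and b ∈ S with b ≠ a, then a ∈ C(S\{b}, q). -/
import Mathlib


open Finset

variable {α : Type*} [Fintype α] [DecidableEq α]

/-- The set of rejected alternatives `R(S,q) = S \ C(S,q)`. -/
def Rej (C : Finset α → ℕ → Finset α) (S : Finset α) (q : ℕ) : Finset α := S \ C S q

/-- A capacity-constrained choice rule chooses a subset of `S` of cardinality at most `q`. -/
def ValidRule (C : Finset α → ℕ → Finset α) : Prop :=
  ∀ S : Finset α, ∀ q : ℕ, S.Nonempty → 1 ≤ q → q ≤ Fintype.card α →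
    C S q ⊆ S ∧ (C S q).card ≤ q

/-- Capacity-filling: `|C(S,q)| = min {|S|, q}`. -/
def CapacityFilling (C : Finset α → ℕ → Finset α) : Prop :=
  ∀ S : Finset α, ∀ q : ℕ, S.Nonempty → 1 ≤ q → q ≤ Fintype.card α →
    (C S q).card = min S.card q

/-- Monotonicity: `C(S,q) ⊆ C(S,q+1)`. -/
def ChoiceMonotone (C : Finset α → ℕ → Finset α) : Prop :=
  ∀ S : Finset α, ∀ q : ℕ, S.Nonempty → 1 ≤ q → q < Fintype.card α →
    C S q ⊆ C S (q + 1)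

/-- Gross substitutes: if `a ∈ C(S,q)` then `a ∈ C(S \ {b}, q)` for `b ≠ a`. -/
def GrossSubstitutes (C : Finset α → ℕ → Finset α) : Prop :=
  ∀ S : Finset α, ∀ q : ℕ, ∀ a b : α, S.Nonempty → 1 ≤ q → q ≤ Fintype.card α →
    a ∈ S → b ∈ S → a ≠ b → a ∈ C S q → a ∈ C (S.erase b) q

/-- Irrelevance of accepted alternatives. -/
def IrrelevanceOfAcceptedAlternatives (C : Finset α → ℕ → Finset α) : Prop :=
  ∀ S S' : Finset α, ∀ q : ℕ, S.Nonempty → S'.Nonempty → 1 ≤ q → q < Fintype.card α →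
    Rej C S q = Rej C S' q →
    C S (q + 1) ∩ Rej C S q = C S' (q + 1) ∩ Rej C S' q

/-- `a` is revealed preferred to `b` at capacity `q`. -/
def RevealedPref (C : Finset α → ℕ → Finset α) (q : ℕ) (a b : α) : Prop :=
  ∃ S : Finset α, S.Nonempty ∧ a ∉ C S (q - 1) ∧ b ∉ C S (q - 1) ∧
    a ∈ C S q ∧ b ∈ Rej C S q

/-- Capacity-wise weak axiom of revealed preference. -/
def CWARP (C : Finset α → ℕ → Finset α) : Prop :=
  ∀ q : ℕ, 1 < q → q ≤ Fintype.card α →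
    ∀ a b : α, RevealedPref C q a b → ¬ RevealedPref C q b a

/-- Lexicographic choice: iteratively pick, for `i = 1, …, q`, the `π i`-maximal
remaining alternative of `S`, stopping when none remain. -/
def lexChoice (π : ℕ → LinearOrder α) (S : Finset α) : ℕ → Finset α
  | 0 => ∅
  | q + 1 =>
      let T := lexChoice π S q
      if h : (S \ T).Nonempty then insert (@Finset.max' α (π q) (S \ T) h) T else T

/-- `C` is (capacity-constrained) lexicographic for the priority profile `π`. -/
def IsLexFor (C : Finset α → ℕ → Finset α) (π : ℕ → LinearOrder α) : Prop :=
  ∀ S : Finset α, ∀ q : ℕ, S.Nonempty → 1 ≤ q → q ≤ Fintype.card α →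
    C S q = lexChoice π S q

/-- `C` is (capacity-constrained) lexicographic. -/
def IsLex (C : Finset α → ℕ → Finset α) : Prop :=
  ∃ π : ℕ → LinearOrder α, IsLexFor C π

private lemma lexChoice_subset (π : ℕ → LinearOrder α) (S : Finset α) :
    ∀ i, lexChoice π S i ⊆ S := by
  intro i
  induction i with
  | zero => simp [lexChoice]
  | succ n ih =>
    letI := π n
    simp only [lexChoice]
    split
    · next h => exact insert_subset ((mem_sdiff.mp (Finset.max'_mem _ h)).1) ih
    · exact ih

private lemma lexChoice_erase (π : ℕ → LinearOrder α) (S : Finset α) (b : α) :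
    ∀ i, (lexChoice π S i).erase b ⊆ lexChoice π (S.erase b) i ∧
      (b ∈ lexChoice π S i ∨ lexChoice π (S.erase b) i = lexChoice π S i) := by
  intro i
  induction i with
  | zero => simp [lexChoice]
  | succ n ih =>
    obtain ⟨h1, h2⟩ := ih
    letI := π n
    set T := lexChoice π S n with hTdef
    set U := lexChoice π (S.erase b) n with hUdef
    have hU : U ⊆ S.erase b := lexChoice_subset π (S.erase b) n
    have hUstep : lexChoice π (S.erase b) (n + 1) =
        if h : ((S.erase b) \ U).Nonempty
        then insert (Finset.max' ((S.erase b) \ U) h) U else U := rfl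
    have hTstep : lexChoice π S (n + 1) =
        if h : (S \ T).Nonempty
        then insert (Finset.max' (S \ T) h) T else T := rfl
    by_cases hb : b ∈ T
    · -- `b` was already chosen in `S`
      have hDsub : (S.erase b) \ U ⊆ S \ T := by
        intro x hx
        rcases mem_sdiff.mp hx with ⟨hx1, hx2⟩
        rcases mem_erase.mp hx1 with ⟨hxb, hxS⟩
        refine mem_sdiff.mpr ⟨hxS, fun hxT => hx2 (h1 (mem_erase.mpr ⟨hxb, hxT⟩))⟩
      have hsub : (lexChoice π S (n+1)).erase b ⊆ lexChoice π (S.erase b) (n+1) := by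
        rw [hTstep]
        by_cases hST : (S \ T).Nonempty
        · rw [dif_pos hST]
          set m := Finset.max' (S \ T) hST with hm
          have hmT : m ∉ T := (mem_sdiff.mp (Finset.max'_mem _ hST)).2
          have hmb : m ≠ b := fun h => hmT (h ▸ hb)
          have hU' : U ⊆ lexChoice π (S.erase b) (n + 1) := by
            rw [hUstep]
            split
            · exact subset_insert _ _
            · exact subset_rfl
          have hmU' : m ∈ lexChoice π (S.erase b) (n + 1) := by
            by_cases hmU : m ∈ U
            · exact hU' hmU
            · have hmD : m ∈ (S.erase b) \ U := by
                refine mem_sdiff.mpr ⟨mem_erase.mpr ⟨hmb, (mem_sdiff.mp (Finset.max'_mem _ hST)).1⟩, hmU⟩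
              have hD : ((S.erase b) \ U).Nonempty := ⟨m, hmD⟩
              have hmax : Finset.max' ((S.erase b) \ U) hD = m := by
                refine le_antisymm ?_ (Finset.le_max' _ _ hmD)
                exact Finset.le_max' _ _ (hDsub (Finset.max'_mem _ hD))
              rw [hUstep, dif_pos hD, hmax]
              exact mem_insert_self _ _
          intro x hx
          rcases mem_erase.mp hx with ⟨hxb, hxm⟩
          rcases mem_insert.mp hxm with rfl | hxT
          · exact hmU'
          · exact hU' (h1 (mem_erase.mpr ⟨hxb, hxT⟩))
        · rw [dif_neg hST]
          refine fun x hx => ?_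
          have : x ∈ U := h1 hx
          rw [hUstep]
          split
          · exact mem_insert_of_mem this
          · exact this
      refine ⟨hsub, Or.inl ?_⟩
      rw [hTstep]
      split
      · exact mem_insert_of_mem hb
      · exact hb
    · -- `b` not yet chosen, so `U = T`
      have hUT : U = T := h2.resolve_left hb
      have hD : (S.erase b) \ U = (S \ T).erase b := by
        rw [hUT]
        ext x
        simp only [mem_sdiff, mem_erase]
        tauto
      by_cases hST : (S \ T).Nonempty
      · set m := Finset.max' (S \ T) hST with hm
        by_cases hmb : m = b
        · -- `S` picks `b` now
          have hTb : lexChoice π S (n + 1) = insert b T := by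
            rw [hTstep, dif_pos hST, ← hmb]
          have hU' : U ⊆ lexChoice π (S.erase b) (n + 1) := by
            rw [hUstep]
            split
            · exact subset_insert _ _
            · exact subset_rfl
          refine ⟨?_, Or.inl (by rw [hTb]; exact mem_insert_self _ _)⟩
          rw [hTb]
          intro x hx
          rcases mem_erase.mp hx with ⟨hxb, hxm⟩
          rcases mem_insert.mp hxm with rfl | hxT
          · exact absurd rfl hxb
          · exact hU' (hUT ▸ hxT)
        · -- the same element `m` is picked in both
          have hmD : m ∈ (S.erase b) \ U := by
            rw [hD]
            exact mem_erase.mpr ⟨hmb, Finset.max'_mem _ hST⟩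
          have hDne : ((S.erase b) \ U).Nonempty := ⟨m, hmD⟩
          have hmax : Finset.max' ((S.erase b) \ U) hDne = m := by
            refine le_antisymm ?_ (Finset.le_max' _ _ hmD)
            refine Finset.le_max' _ _ ?_
            have hDsub2 : S.erase b \ U ⊆ S \ T := by
              rw [hD]; exact Finset.erase_subset _ _
            exact hDsub2 (Finset.max'_mem _ hDne)
          have hUeq : lexChoice π (S.erase b) (n + 1) = insert m T := by
            rw [hUstep, dif_pos hDne, hmax, hUT]
          have hTeq : lexChoice π S (n + 1) = insert m T := by
            rw [hTstep, dif_pos hST]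
          rw [hUeq, hTeq]
          exact ⟨Finset.erase_subset _ _, Or.inr rfl⟩
      · have hDe : ¬ ((S.erase b) \ U).Nonempty := by
          rw [hD]
          intro ⟨x, hx⟩
          exact hST ⟨x, Finset.erase_subset _ _ hx⟩
        rw [hTstep, hUstep, dif_neg hST, dif_neg hDe]
        exact ⟨fun x hx => hUT ▸ (Finset.erase_subset _ _ hx), Or.inr hUT⟩

theorem lexChoice_grossSubstitutes [Nonempty α] (π : ℕ → LinearOrder α) :
    GrossSubstitutes (fun S k => lexChoice π S k) := by
  intro S q a b _ _ _ _ _ hab ha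
  exact (lexChoice_erase π S b q).1 (Finset.mem_erase.mpr ⟨hab, ha⟩)
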